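/- arXiv:1901.06102 — 4 statements merged into one kernel-verified Lean document; each statement's English description precedes it below -/
import Mathlib

section
/- The function C_H(s,t) = s^{2H} + t^{2H} - (1/2)[(s+t)^{2H} + |s-t|^{2H}] is nonnegative for all s, t ≥ 0 when 0 < H < 1. -/
/-!
With `u = s + t` and `v = |s - t|` we have `u² + v² = 2 (s² + t²)`. For `0 ≤ p ≤ 2` the map
`x ↦ x ^ (p / 2)` is concave and subadditive on `[0, ∞)`, so
`u ^ p + v ^ p ≤ 2 ((u² + v²) / 2) ^ (p / 2) = 2 (s² + t²) ^ (p / 2) ≤ 2 (s ^ p + t ^ p)`.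
-/

namespace Real

lemma rpow_eq_sq_rpow_half {x : ℝ} (hx : 0 ≤ x) (p : ℝ) : x ^ p = (x ^ 2) ^ (p / 2) := by
  rw [← rpow_natCast, ← rpow_mul hx, Nat.cast_ofNat, mul_div_cancel₀ p two_ne_zero]

lemma rpow_add_rpow_le_two_mul_rpow_midpoint {q x y : ℝ} (hq₀ : 0 ≤ q) (hq₁ : q ≤ 1)
    (hx : 0 ≤ x) (hy : 0 ≤ y) : x ^ q + y ^ q ≤ 2 * ((x + y) / 2) ^ q := by
  have h := (concaveOn_rpow hq₀ hq₁).2 (Set.mem_Ici.2 hx) (Set.mem_Ici.2 hy)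
    (by norm_num : (0 : ℝ) ≤ 1 / 2) (by norm_num : (0 : ℝ) ≤ 1 / 2) (add_halves 1)
  simp only [smul_eq_mul] at h
  calc x ^ q + y ^ q = 2 * (1 / 2 * x ^ q + 1 / 2 * y ^ q) := by ring
    _ ≤ 2 * (1 / 2 * x + 1 / 2 * y) ^ q := by gcongr
    _ = 2 * ((x + y) / 2) ^ q := by ring_nf

lemma add_rpow_add_abs_sub_rpow_le {p s t : ℝ} (hp₀ : 0 ≤ p) (hp₂ : p ≤ 2)
    (hs : 0 ≤ s) (ht : 0 ≤ t) :
    (s + t) ^ p + |s - t| ^ p ≤ 2 * (s ^ p + t ^ p) := by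
  have hq₀ : 0 ≤ p / 2 := by positivity
  have hq₁ : p / 2 ≤ 1 := by linarith
  calc (s + t) ^ p + |s - t| ^ p = ((s + t) ^ 2) ^ (p / 2) + (|s - t| ^ 2) ^ (p / 2) := by
        rw [rpow_eq_sq_rpow_half (by positivity), rpow_eq_sq_rpow_half (abs_nonneg _)]
    _ ≤ 2 * (((s + t) ^ 2 + |s - t| ^ 2) / 2) ^ (p / 2) :=
        rpow_add_rpow_le_two_mul_rpow_midpoint hq₀ hq₁ (by positivity) (by positivity)
    _ = 2 * (s ^ 2 + t ^ 2) ^ (p / 2) := by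
        rw [sq_abs]
        ring_nf
    _ ≤ 2 * ((s ^ 2) ^ (p / 2) + (t ^ 2) ^ (p / 2)) := by
        gcongr
        exact rpow_add_le_add_rpow (by positivity) (by positivity) hq₀ hq₁
    _ = 2 * (s ^ p + t ^ p) := by
        rw [← rpow_eq_sq_rpow_half hs, ← rpow_eq_sq_rpow_half ht]

end Real

theorem subfbm_covariance_nonneg (H : ℝ) (hH : 0 < H ∧ H < 1) (s t : ℝ)
    (hs : 0 ≤ s) (ht : 0 ≤ t) :
    0 ≤ s ^ (2 * H) + t ^ (2 * H)
      - (1 / 2) * ((s + t) ^ (2 * H) + |s - t| ^ (2 * H)) := by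
  have h := Real.add_rpow_add_abs_sub_rpow_le (p := 2 * H) (by linarith) (by linarith) hs ht
  linarith
end

section
/- For all s, t > 0, if 0 < H < 1/2 then C_H(s,t) > R_H(s,t), and if 1/2 < H < 1 then C_H(s,t) < R_H(s,t), where C_H(s,t) = s^{2H} + t^{2H} - (1/2)[(s+t)^{2H} + |s-t|^{2H}] and R_H(s,t) = (1/2)[s^{2H} + t^{2H} - |s-t|^{2H}]. -/
lemma rpow_strict_subadd (s t p : ℝ) (hs : 0 < s) (ht : 0 < t)
    (hp0 : 0 < p) (hp1 : p < 1) : (s + t) ^ p < s ^ p + t ^ p := by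
  have hst : 0 < s + t := by linarith
  have ha : s / (s + t) < 1 := by rw [div_lt_one hst]; linarith
  have hb : t / (s + t) < 1 := by rw [div_lt_one hst]; linarith
  have ha0 : 0 < s / (s + t) := div_pos hs hst
  have hb0 : 0 < t / (s + t) := div_pos ht hst
  have h1 : (s / (s + t)) ^ p > s / (s + t) := by
    calc s / (s + t) = (s / (s + t)) ^ (1 : ℝ) := (Real.rpow_one _).symm
    _ < (s / (s + t)) ^ p := Real.rpow_lt_rpow_of_exponent_gt ha0 ha hp1
  have h2 : (t / (s + t)) ^ p > t / (s + t) := by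
    calc t / (s + t) = (t / (s + t)) ^ (1 : ℝ) := (Real.rpow_one _).symm
    _ < (t / (s + t)) ^ p := Real.rpow_lt_rpow_of_exponent_gt hb0 hb hp1
  have hsum : s / (s + t) + t / (s + t) = 1 := by field_simp
  have key : 1 < (s / (s + t)) ^ p + (t / (s + t)) ^ p := by linarith
  have hsa : s ^ p = (s + t) ^ p * (s / (s + t)) ^ p := by
    rw [← Real.mul_rpow hst.le (le_of_lt ha0)]
    congr 1; field_simp
  have hsb : t ^ p = (s + t) ^ p * (t / (s + t)) ^ p := by
    rw [← Real.mul_rpow hst.le (le_of_lt hb0)]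
    congr 1; field_simp
  have hpos : 0 < (s + t) ^ p := Real.rpow_pos_of_pos hst p
  rw [hsa, hsb, ← mul_add]
  nlinarith

lemma rpow_strict_superadd (s t p : ℝ) (hs : 0 < s) (ht : 0 < t)
    (hp1 : 1 < p) : s ^ p + t ^ p < (s + t) ^ p := by
  have hst : 0 < s + t := by linarith
  have ha : s / (s + t) < 1 := by rw [div_lt_one hst]; linarith
  have hb : t / (s + t) < 1 := by rw [div_lt_one hst]; linarith
  have ha0 : 0 < s / (s + t) := div_pos hs hst
  have hb0 : 0 < t / (s + t) := div_pos ht hst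
  have h1 : (s / (s + t)) ^ p < s / (s + t) := by
    calc (s / (s + t)) ^ p < (s / (s + t)) ^ (1 : ℝ) :=
      Real.rpow_lt_rpow_of_exponent_gt ha0 ha hp1
    _ = s / (s + t) := Real.rpow_one _
  have h2 : (t / (s + t)) ^ p < t / (s + t) := by
    calc (t / (s + t)) ^ p < (t / (s + t)) ^ (1 : ℝ) :=
      Real.rpow_lt_rpow_of_exponent_gt hb0 hb hp1
    _ = t / (s + t) := Real.rpow_one _
  have hsum : s / (s + t) + t / (s + t) = 1 := by field_simp
  have key : (s / (s + t)) ^ p + (t / (s + t)) ^ p < 1 := by linarith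
  have hsa : s ^ p = (s + t) ^ p * (s / (s + t)) ^ p := by
    rw [← Real.mul_rpow hst.le (le_of_lt ha0)]
    congr 1; field_simp
  have hsb : t ^ p = (s + t) ^ p * (t / (s + t)) ^ p := by
    rw [← Real.mul_rpow hst.le (le_of_lt hb0)]
    congr 1; field_simp
  have hpos : 0 < (s + t) ^ p := Real.rpow_pos_of_pos hst p
  rw [hsa, hsb, ← mul_add]
  nlinarith

theorem subfbm_vs_fbm_covariance (H : ℝ) (s t : ℝ) (hs : 0 < s) (ht : 0 < t) :
    ((0 < H ∧ H < 1 / 2) →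
      (1 / 2) * (s ^ (2 * H) + t ^ (2 * H) - |s - t| ^ (2 * H)) <
        s ^ (2 * H) + t ^ (2 * H)
          - (1 / 2) * ((s + t) ^ (2 * H) + |s - t| ^ (2 * H))) ∧
    ((1 / 2 < H ∧ H < 1) →
      s ^ (2 * H) + t ^ (2 * H)
          - (1 / 2) * ((s + t) ^ (2 * H) + |s - t| ^ (2 * H)) <
        (1 / 2) * (s ^ (2 * H) + t ^ (2 * H) - |s - t| ^ (2 * H))) := by
  constructor
  · rintro ⟨h0, h1⟩
    have := rpow_strict_subadd s t (2 * H) hs ht (by linarith) (by linarith)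
    linarith
  · rintro ⟨h0, h1⟩
    have := rpow_strict_superadd s t (2 * H) hs ht (by linarith)
    linarith
end

section
/- For 1/2 < H < 1 and all 0 ≤ s ≤ t, letting β_H = 2 - 2^{2H-1}, one has β_H (t-s)^{2H} ≤ C_H(t,t) - 2C_H(s,t) + C_H(s,s) ≤ (t-s)^{2H}, where C_H(s,t) = s^{2H} + t^{2H} - (1/2)[(s+t)^{2H} + |s-t|^{2H}]. -/
/-!
The increment variance equals the fractional Brownian increment variance `(t - s) ^ (2H)` minus
half the second difference of `x ↦ x ^ (2H)` at `2s` with step `t - s`. Convexity of `x ^ (2H)`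
makes this second difference nonnegative, giving the upper bound. Its derivative in the base point
is the second difference of `2H x ^ (2H - 1)`, a concave function, so it decreases in the base
point and is largest at `0`, where it equals `(2 ^ (2H) - 2) (t - s) ^ (2H)`; this gives the lower
bound.
-/

/-- Covariance of sub-fractional Brownian motion. -/
noncomputable def subfbmCov (H s t : ℝ) : ℝ :=
  s ^ (2 * H) + t ^ (2 * H) - (1 / 2) * ((s + t) ^ (2 * H) + |s - t| ^ (2 * H))

open Set

def secondDifference (f : ℝ → ℝ) (a x : ℝ) : ℝ :=
  f (x + 2 * a) - 2 * f (x + a) + f x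

lemma ConvexOn.secondDifference_nonneg {s : Set ℝ} {f : ℝ → ℝ} (hf : ConvexOn ℝ s f) {a x : ℝ}
    (hx : x ∈ s) (hx2a : x + 2 * a ∈ s) : 0 ≤ secondDifference f a x := by
  have hmid := hf.2 hx hx2a (by norm_num : (0 : ℝ) ≤ 1 / 2) (by norm_num : (0 : ℝ) ≤ 1 / 2)
    (by norm_num)
  simp only [smul_eq_mul] at hmid
  rw [show 1 / 2 * x + 1 / 2 * (x + 2 * a) = x + a by ring] at hmid
  unfold secondDifference
  linarith

lemma ConcaveOn.secondDifference_nonpos {s : Set ℝ} {f : ℝ → ℝ} (hf : ConcaveOn ℝ s f) {a x : ℝ}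
    (hx : x ∈ s) (hx2a : x + 2 * a ∈ s) : secondDifference f a x ≤ 0 := by
  have hneg := hf.neg.secondDifference_nonneg hx hx2a
  simp only [secondDifference, Pi.neg_apply] at hneg ⊢
  linarith

lemma hasDerivAt_secondDifference {f f' : ℝ → ℝ} (hf : ∀ y, HasDerivAt f (f' y) y) (a x : ℝ) :
    HasDerivAt (secondDifference f a) (secondDifference f' a x) x :=
  (((hf _).comp_add_const x (2 * a)).sub (((hf _).comp_add_const x a).const_mul 2)).add (hf x)

lemma antitoneOn_secondDifference {f f' : ℝ → ℝ} (hf : ∀ y, HasDerivAt f (f' y) y)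
    (hf' : ConcaveOn ℝ (Ici 0) f') {a : ℝ} (ha : 0 ≤ a) :
    AntitoneOn (secondDifference f a) (Ici 0) :=
  antitoneOn_of_hasDerivWithinAt_nonpos (convex_Ici 0)
    (fun x _ ↦ (hasDerivAt_secondDifference hf a x).continuousAt.continuousWithinAt)
    (fun x _ ↦ (hasDerivAt_secondDifference hf a x).hasDerivWithinAt)
    (fun x hx ↦ by
      rw [interior_Ici, mem_Ioi] at hx
      exact hf'.secondDifference_nonpos hx.le (by rw [mem_Ici]; linarith))

lemma secondDifference_rpow_le {p : ℝ} (hp1 : 1 ≤ p) (hp2 : p ≤ 2) {a x : ℝ} (ha : 0 ≤ a)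
    (hx : 0 ≤ x) : secondDifference (· ^ p) a x ≤ (2 ^ p - 2) * a ^ p := by
  have hderiv : ∀ y : ℝ, HasDerivAt (· ^ p) (p * y ^ (p - 1)) y :=
    fun _ ↦ Real.hasDerivAt_rpow_const (Or.inr hp1)
  have hconcave : ConcaveOn ℝ (Ici 0) fun y : ℝ ↦ p * y ^ (p - 1) :=
    (Real.concaveOn_rpow (by linarith) (by linarith)).smul (by linarith)
  calc secondDifference (· ^ p) a x
      ≤ secondDifference (· ^ p) a 0 :=
        antitoneOn_secondDifference hderiv hconcave ha self_mem_Ici hx hx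
    _ = (2 ^ p - 2) * a ^ p := by
        simp only [secondDifference, zero_add, Real.zero_rpow (by linarith : p ≠ 0),
          Real.mul_rpow zero_le_two ha]
        ring

lemma subfbmCov_increment_eq {H s t : ℝ} (hH : H ≠ 0) (hst : s ≤ t) :
    subfbmCov H t t - 2 * subfbmCov H s t + subfbmCov H s s =
      (t - s) ^ (2 * H) - secondDifference (· ^ (2 * H)) (t - s) (2 * s) / 2 := by
  have habs : |s - t| = t - s := by rw [abs_sub_comm, abs_of_nonneg (sub_nonneg.2 hst)]
  simp only [subfbmCov, secondDifference, habs, sub_self, abs_zero,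
    Real.zero_rpow (mul_ne_zero two_ne_zero hH)]
  rw [show 2 * s + 2 * (t - s) = t + t by ring, show 2 * s + (t - s) = s + t by ring,
    show 2 * s = s + s by ring]
  ring

theorem subfbm_increment_variance_bounds_high (H : ℝ) (hH : 1 / 2 < H ∧ H < 1)
    (s t : ℝ) (hs : 0 ≤ s) (hst : s ≤ t) :
    (2 - 2 ^ (2 * H - 1)) * (t - s) ^ (2 * H) ≤
        subfbmCov H t t - 2 * subfbmCov H s t + subfbmCov H s s ∧
      subfbmCov H t t - 2 * subfbmCov H s t + subfbmCov H s s ≤ (t - s) ^ (2 * H) := by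
  obtain ⟨hH1, hH2⟩ := hH
  have hΔ_nonneg : 0 ≤ secondDifference (· ^ (2 * H)) (t - s) (2 * s) :=
    (convexOn_rpow (by linarith)).secondDifference_nonneg (by rw [mem_Ici]; linarith)
      (by rw [mem_Ici]; linarith)
  have hΔ_le := secondDifference_rpow_le (p := 2 * H) (by linarith) (by linarith)
    (sub_nonneg.2 hst) (by linarith : 0 ≤ 2 * s)
  have htwo : (2 : ℝ) ^ (2 * H - 1) = 2 ^ (2 * H) / 2 := by
    rw [Real.rpow_sub two_pos, Real.rpow_one]
  rw [subfbmCov_increment_eq (by linarith) hst, htwo]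
  constructor <;> linarith
end

section
/- For 0 < H < 1/2 and all 0 ≤ s ≤ t, letting β_H = 2 - 2^{2H-1}, one has (t-s)^{2H} ≤ -2^{2H-1}(t^{2H} + s^{2H}) + (t+s)^{2H} + (t-s)^{2H} ≤ β_H (t-s)^{2H}. -/
/-!
Write `p = 2H ∈ (0, 1)`. The lower bound is midpoint concavity of `x ↦ x ^ p`. For the upper
bound put `u = t - s`: the function `v ↦ (u + 2v)^p - 2^(p-1) ((u + v)^p + v^p)` is
nonincreasing on `[0, ∞)`, because its derivative is `p` times
`2 (u + 2v)^(p-1) - 2^(p-1) ((u + v)^(p-1) + v^(p-1))`, which is `≤ 0` by midpoint convexity of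
`x ↦ x ^ (p - 1)`; comparing `v = s` with `v = 0`, where it equals `(1 - 2^(p-1)) u^p`, gives the
bound.
-/

open Real Set

lemma ConvexOn.map_add_div_two_le {s : Set ℝ} {f : ℝ → ℝ} (hf : ConvexOn ℝ s f) {a b : ℝ}
    (ha : a ∈ s) (hb : b ∈ s) : f ((a + b) / 2) ≤ (f a + f b) / 2 := by
  have h := hf.2 ha hb (by norm_num : (0 : ℝ) ≤ 1 / 2) (by norm_num : (0 : ℝ) ≤ 1 / 2)
    (by norm_num)
  simp only [smul_eq_mul] at h
  rw [show (a + b) / 2 = 1 / 2 * a + 1 / 2 * b by ring]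
  linarith

lemma ConcaveOn.map_add_div_two_ge {s : Set ℝ} {f : ℝ → ℝ} (hf : ConcaveOn ℝ s f) {a b : ℝ}
    (ha : a ∈ s) (hb : b ∈ s) : (f a + f b) / 2 ≤ f ((a + b) / 2) := by
  have := hf.neg.map_add_div_two_le ha hb
  simp only [Pi.neg_apply] at this
  linarith

lemma Real.convexOn_rpow_of_nonpos {q : ℝ} (hq : q ≤ 0) :
    ConvexOn ℝ (Ioi 0) fun x : ℝ ↦ x ^ q := by
  refine MonotoneOn.convexOn_of_deriv (convex_Ioi 0)
    (fun x hx ↦ (continuousAt_rpow_const x q (.inl hx.ne')).continuousWithinAt)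
    (fun x hx ↦ ?_) ?_
  · rw [interior_Ioi] at hx
    exact (hasDerivAt_rpow_const (.inl hx.ne')).differentiableAt.differentiableWithinAt
  · rw [interior_Ioi, deriv_rpow_const']
    intro x hx y _ hxy
    exact mul_le_mul_of_nonpos_left (rpow_le_rpow_of_nonpos hx hxy (by linarith)) hq

lemma Real.rpow_eq_two_rpow_mul_div_two_rpow {x : ℝ} (hx : 0 ≤ x) (r : ℝ) :
    x ^ r = 2 ^ r * (x / 2) ^ r := by
  rw [← mul_rpow zero_le_two (by positivity), mul_div_cancel₀ _ two_ne_zero]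

lemma Real.rpow_add_le_mul_rpow_add_rpow_of_nonpos {q : ℝ} (hq : q ≤ 0) {a b : ℝ}
    (ha : 0 < a) (hb : 0 < b) : (a + b) ^ q ≤ 2 ^ (q - 1) * (a ^ q + b ^ q) := by
  have hmid := (convexOn_rpow_of_nonpos hq).map_add_div_two_le ha hb
  rw [rpow_eq_two_rpow_mul_div_two_rpow (by positivity : 0 ≤ a + b) q, rpow_sub_one two_ne_zero]
  have := mul_le_mul_of_nonneg_left hmid (rpow_nonneg zero_le_two q)
  linarith

lemma Real.mul_rpow_add_rpow_le_rpow_add {p : ℝ} (hp0 : 0 ≤ p) (hp1 : p ≤ 1) {a b : ℝ}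
    (ha : 0 ≤ a) (hb : 0 ≤ b) : 2 ^ (p - 1) * (a ^ p + b ^ p) ≤ (a + b) ^ p := by
  have hmid := (concaveOn_rpow hp0 hp1).map_add_div_two_ge (mem_Ici.2 ha) (mem_Ici.2 hb)
  rw [rpow_eq_two_rpow_mul_div_two_rpow (by positivity : 0 ≤ a + b) p, rpow_sub_one two_ne_zero]
  have := mul_le_mul_of_nonneg_left hmid (rpow_nonneg zero_le_two p)
  linarith

lemma Real.antitoneOn_rpow_add_two_mul_sub {p : ℝ} (hp0 : 0 < p) (hp1 : p ≤ 1) {u : ℝ}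
    (hu : 0 ≤ u) :
    AntitoneOn (fun v : ℝ ↦ (u + 2 * v) ^ p - 2 ^ (p - 1) * ((u + v) ^ p + v ^ p)) (Ici 0) := by
  have hcont : Continuous fun x : ℝ ↦ x ^ p := continuous_rpow_const hp0.le
  refine antitoneOn_of_hasDerivWithinAt_nonpos (convex_Ici 0) (by fun_prop)
    (f' := fun v ↦
      p * (2 * (u + 2 * v) ^ (p - 1) - 2 ^ (p - 1) * ((u + v) ^ (p - 1) + v ^ (p - 1))))
    (fun v hv ↦ ?_) (fun v hv ↦ ?_) <;> rw [interior_Ici, mem_Ioi] at hv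
  · have h1 : HasDerivAt (fun v : ℝ ↦ (u + 2 * v) ^ p) (2 * p * (u + 2 * v) ^ (p - 1)) v := by
      simpa using (((hasDerivAt_id v).const_mul 2).const_add u).rpow_const (p := p)
        (.inl (by positivity))
    have h2 : HasDerivAt (fun v : ℝ ↦ (u + v) ^ p) (p * (u + v) ^ (p - 1)) v := by
      simpa using ((hasDerivAt_id v).const_add u).rpow_const (p := p) (.inl (by positivity))
    have h3 : HasDerivAt (fun v : ℝ ↦ v ^ p) (p * v ^ (p - 1)) v :=
      hasDerivAt_rpow_const (.inl hv.ne')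
    rw [interior_Ici]
    exact ((h1.sub ((h2.add h3).const_mul _)).congr_deriv (by ring)).hasDerivWithinAt
  · have := rpow_add_le_mul_rpow_add_rpow_of_nonpos (q := p - 1) (by linarith)
      (show 0 < u + v by linarith) hv
    rw [show u + v + v = u + 2 * v by ring, rpow_sub_one two_ne_zero] at this
    exact mul_nonpos_of_nonneg_of_nonpos hp0.le (by linarith)

lemma Real.add_rpow_le_mul_rpow_add_rpow_add_mul_sub_rpow {p : ℝ} (hp0 : 0 < p) (hp1 : p ≤ 1)
    {s t : ℝ} (hs : 0 ≤ s) (hst : s ≤ t) :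
    (t + s) ^ p ≤ 2 ^ (p - 1) * (t ^ p + s ^ p) + (1 - 2 ^ (p - 1)) * (t - s) ^ p := by
  have h := antitoneOn_rpow_add_two_mul_sub hp0 hp1 (sub_nonneg.2 hst) self_mem_Ici hs hs
  simp only [mul_zero, add_zero, zero_rpow hp0.ne', sub_add_cancel] at h
  rw [show t - s + 2 * s = t + s by ring] at h
  linarith

theorem subfbm_increment_variance_bounds_low (H : ℝ) (hH : 0 < H ∧ H < 1 / 2)
    (s t : ℝ) (hs : 0 ≤ s) (hst : s ≤ t) :
    (t - s) ^ (2 * H) ≤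
        -(2 ^ (2 * H - 1)) * (t ^ (2 * H) + s ^ (2 * H))
          + (t + s) ^ (2 * H) + (t - s) ^ (2 * H) ∧
      -(2 ^ (2 * H - 1)) * (t ^ (2 * H) + s ^ (2 * H))
          + (t + s) ^ (2 * H) + (t - s) ^ (2 * H) ≤
        (2 - 2 ^ (2 * H - 1)) * (t - s) ^ (2 * H) := by
  have hp0 : 0 < 2 * H := by linarith
  have hp1 : 2 * H ≤ 1 := by linarith
  have lower := mul_rpow_add_rpow_le_rpow_add hp0.le hp1 (hs.trans hst) hs
  have upper := add_rpow_le_mul_rpow_add_rpow_add_mul_sub_rpow hp0 hp1 hs hst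
  constructor <;> linarith
end
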